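/- With λ and t₀ as in the Tian–Zhang theorem, choose t > t₀ large enough that ‖I_t ∘ Φ^*_{λ,t} − i‖ < 1. Then ∂̄_t γ = 0 for every γ ∈ E^{*,K}_{λ,t}; that is, the deformed Dolbeault differential vanishes identically on the low-eigenvalue subcomplex. -/

import Mathlib

/-!
STATEMENT 17.  Setup (Tian–Zhang deformation): `ΩK j` is the (L²-completed) space
`Ω^{0,j}(X, L)^K` of `K`-invariant `(0,j)`-forms on `X` (indexed by `j : ℤ`), `Ω0 j` the
space `Ω^{0,j}(X₀, L₀)` of forms on the reduction `X₀`; `D t` is the deformed Dolbeault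
differential `∂̄_t`, `E^{j,K}_{λ,t} = lowEigenspace (laplacianAt ΩK (D t) j) λ` the span
of the eigenforms of the deformed `K`-invariant Laplacian `□_t^{j,K}` with eigenvalue
`≤ λ` — a subcomplex of `(Ω^{0,*}(X,L)^K, ∂̄_t)` (hypothesis `hsub`); `P lam t j` the
orthogonal projection onto it; `ℋ^j(X₀,L₀) = ker (laplacianAt Ω0 d0 j)` the harmonic
forms, with inclusion `i = Submodule.subtypeL …`;
`Φ^j_{λ,t} = P^j_{λ,t} ∘ Ψ_t^j : ℋ^j(X₀,L₀) → E^{j,K}_{λ,t}` the Tian–Zhang isomorphism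
(valid for `t > t₀`, hypothesis `hΦiso`); `I t j` the weighted fibre-integration map,
satisfying `∂̄ ∘ I_t = I_t ∘ ∂̄_t` (hypothesis `hId`).

Claim: with `λ` and `t₀` as in the Tian–Zhang theorem, if `t > t₀` is chosen so large
that `‖I_t ∘ Φ^*_{λ,t} − i‖ < 1`, then `∂̄_t γ = 0` for every `γ ∈ E^{*,K}_{λ,t}`.
-/
open scoped ComplexInnerProductSpace

variable {V : Type*} [NormedAddCommGroup V] [InnerProductSpace ℂ V]

/-- The span of the eigenforms of `T` with (real) eigenvalue at most `lam`. -/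
noncomputable def lowEigenspace (T : V →L[ℂ] V) (lam : ℝ) : Submodule ℂ V :=
  ⨆ c ∈ Set.Iic lam, Module.End.eigenspace (↑T : Module.End ℂ V) (c : ℂ)

variable (Ω : ℤ → Type*) [∀ j, NormedAddCommGroup (Ω j)]
  [∀ j, InnerProductSpace ℂ (Ω j)] [∀ j, CompleteSpace (Ω j)]

/-- The Laplacian `d† d + d d†` of the complex `d` in degree `j + 1`. -/
noncomputable def laplacianAt (d : ∀ j : ℤ, Ω j →L[ℂ] Ω (j + 1)) (j : ℤ) :
    Ω (j + 1) →L[ℂ] Ω (j + 1) :=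
  (ContinuousLinearMap.adjoint (d (j + 1))).comp (d (j + 1)) +
    (d j).comp (ContinuousLinearMap.adjoint (d j))

theorem deformed_dbar_vanishes_on_low_eigenvalue_subcomplex
    (Ω0 ΩK : ℤ → Type*)
    [∀ j, NormedAddCommGroup (Ω0 j)] [∀ j, InnerProductSpace ℂ (Ω0 j)]
    [∀ j, CompleteSpace (Ω0 j)]
    [∀ j, NormedAddCommGroup (ΩK j)] [∀ j, InnerProductSpace ℂ (ΩK j)]
    [∀ j, CompleteSpace (ΩK j)]
    -- the Dolbeault differential `∂̄` on `X₀` (adjoints taken w.r.t. `h̃² g^{L₀}`, `g^{X₀}`)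
    (d0 : ∀ j, Ω0 j →L[ℂ] Ω0 (j + 1))
    -- the deformed Dolbeault differential `∂̄_t` on `K`-invariant forms on `X`
    (D : ℝ → ∀ j, ΩK j →L[ℂ] ΩK (j + 1))
    -- the Tian–Zhang map `Ψ_t(α) = σ(β_t/h) q*α`
    (Ψ : ℝ → ∀ j, Ω0 j →L[ℂ] ΩK j)
    -- the orthogonal projection onto `E^{j,K}_{λ,t}`
    (P : ℝ → ℝ → ∀ j, ΩK (j + 1) →L[ℂ] ΩK (j + 1))
    (hPidem : ∀ lam t j, (P lam t j).comp (P lam t j) = P lam t j)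
    (hPsa : ∀ lam t j (x y : ΩK (j + 1)), ⟪P lam t j x, y⟫ = ⟪x, P lam t j y⟫)
    (hPrange : ∀ lam t j,
      LinearMap.range (P lam t j : ΩK (j + 1) →ₗ[ℂ] ΩK (j + 1)) = lowEigenspace (laplacianAt ΩK (D t) j) lam)
    -- the integration map `I_t α = (t/2π)^{r/4} ∫_{q⁻¹(x)} e^{−t|μ|²/2} α ∧ ω^r`
    (I : ℝ → ∀ j, ΩK j →L[ℂ] Ω0 j)
    (lam t₀ t : ℝ) (hlam : 0 < lam) (ht₀ : 0 < t₀) (ht : t₀ < t)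
    -- `(E^{*,K}_{λ,t}, ∂̄_t)` is a subcomplex of `(Ω^{0,*}(X,L)^K, ∂̄_t)`
    (hsub : ∀ (j : ℤ), ∀ γ ∈ lowEigenspace (laplacianAt ΩK (D t) j) lam,
      D t (j + 1) γ ∈ lowEigenspace (laplacianAt ΩK (D t) (j + 1)) lam)
    -- `∂̄ ∘ I_t = I_t ∘ ∂̄_t`
    (hId : ∀ j : ℤ, (d0 (j + 1)).comp (I t (j + 1)) = (I t (j + 1 + 1)).comp (D t (j + 1)))
    -- the Tian–Zhang isomorphism `Φ^j_{λ,t} : ℋ^j(X₀,L₀) → E^{j,K}_{λ,t}` (for `t > t₀`)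
    (hΦiso : ∀ j : ℤ,
      ∃ e : LinearMap.ker (laplacianAt Ω0 d0 j : Ω0 (j + 1) →ₗ[ℂ] Ω0 (j + 1)) ≃ₗ[ℂ]
          lowEigenspace (laplacianAt ΩK (D t) j) lam,
        ∀ α : LinearMap.ker (laplacianAt Ω0 d0 j : Ω0 (j + 1) →ₗ[ℂ] Ω0 (j + 1)),
          (e α : ΩK (j + 1)) = P lam t j (Ψ t (j + 1) (α : Ω0 (j + 1))))
    -- `t` is chosen so large that `‖I_t ∘ Φ^*_{λ,t} − i‖ < 1`
    (hbound : ∀ j : ℤ,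
      ‖(I t (j + 1)).comp ((P lam t j).comp ((Ψ t (j + 1)).comp
            (Submodule.subtypeL (LinearMap.ker (laplacianAt Ω0 d0 j : Ω0 (j + 1) →ₗ[ℂ] Ω0 (j + 1))))))
          - Submodule.subtypeL (LinearMap.ker (laplacianAt Ω0 d0 j : Ω0 (j + 1) →ₗ[ℂ] Ω0 (j + 1)))‖ < 1) :
    ∀ j : ℤ, ∀ γ ∈ lowEigenspace (laplacianAt ΩK (D t) j) lam,
      D t (j + 1) γ = 0 := by
  intro j γ hγ
  obtain ⟨e, he⟩ := hΦiso (j + 1)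
  have hmem := hsub j γ hγ
  set α : LinearMap.ker (laplacianAt Ω0 d0 (j + 1) : Ω0 (j + 1 + 1) →ₗ[ℂ] Ω0 (j + 1 + 1)) := e.symm ⟨D t (j + 1) γ, hmem⟩ with hα
  have heq : D t (j + 1) γ = P lam t (j + 1) (Ψ t (j + 1 + 1) (α : Ω0 (j + 1 + 1))) := by
    have h := he α
    rw [hα, e.apply_symm_apply] at h
    exact h
  -- harmonicity: d† α = 0
  have hker : laplacianAt Ω0 d0 (j + 1) (α : Ω0 (j + 1 + 1)) = 0 := α.2
  have hdag : ContinuousLinearMap.adjoint (d0 (j + 1)) (α : Ω0 (j + 1 + 1)) = 0 := by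
    have h0 : ⟪laplacianAt Ω0 d0 (j + 1) (α : Ω0 (j + 1 + 1)), (α : Ω0 (j + 1 + 1))⟫ = 0 := by
      rw [hker]; simp
    have h1 : ⟪(ContinuousLinearMap.adjoint (d0 (j + 1 + 1)))
          (d0 (j + 1 + 1) (α : Ω0 (j + 1 + 1))), (α : Ω0 (j + 1 + 1))⟫
        = ((‖d0 (j + 1 + 1) (α : Ω0 (j + 1 + 1))‖ : ℂ)) ^ 2 := by
      rw [ContinuousLinearMap.adjoint_inner_left, inner_self_eq_norm_sq_to_K]
      norm_cast
    have h2 : ⟪d0 (j + 1) ((ContinuousLinearMap.adjoint (d0 (j + 1)))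
          (α : Ω0 (j + 1 + 1))), (α : Ω0 (j + 1 + 1))⟫
        = ((‖ContinuousLinearMap.adjoint (d0 (j + 1)) (α : Ω0 (j + 1 + 1))‖ : ℂ)) ^ 2 := by
      rw [← ContinuousLinearMap.adjoint_inner_right, inner_self_eq_norm_sq_to_K]
      norm_cast
    have hexp : ((‖d0 (j + 1 + 1) (α : Ω0 (j + 1 + 1))‖ : ℂ)) ^ 2
        + ((‖ContinuousLinearMap.adjoint (d0 (j + 1)) (α : Ω0 (j + 1 + 1))‖ : ℂ)) ^ 2 = 0 := by
      rw [← h0]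
      simp only [laplacianAt, ContinuousLinearMap.add_apply, ContinuousLinearMap.comp_apply,
        inner_add_left, h1, h2]
    have hre : ‖d0 (j + 1 + 1) (α : Ω0 (j + 1 + 1))‖ ^ 2
        + ‖ContinuousLinearMap.adjoint (d0 (j + 1)) (α : Ω0 (j + 1 + 1))‖ ^ 2 = 0 := by
      exact_mod_cast hexp
    have hb : ‖ContinuousLinearMap.adjoint (d0 (j + 1)) (α : Ω0 (j + 1 + 1))‖ ^ 2 = 0 := by
      nlinarith [sq_nonneg ‖d0 (j + 1 + 1) (α : Ω0 (j + 1 + 1))‖,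
        sq_nonneg ‖ContinuousLinearMap.adjoint (d0 (j + 1)) (α : Ω0 (j + 1 + 1))‖]
    have hb' := pow_eq_zero_iff (n := 2) (by norm_num) |>.mp hb
    exact norm_eq_zero.mp hb'
  set Jmap : LinearMap.ker (laplacianAt Ω0 d0 (j + 1) : Ω0 (j + 1 + 1) →ₗ[ℂ] Ω0 (j + 1 + 1)) →L[ℂ] Ω0 (j + 1 + 1) :=
    (I t (j + 1 + 1)).comp ((P lam t (j + 1)).comp ((Ψ t (j + 1 + 1)).comp
      (Submodule.subtypeL (LinearMap.ker (laplacianAt Ω0 d0 (j + 1) : Ω0 (j + 1 + 1) →ₗ[ℂ] Ω0 (j + 1 + 1)))))) with hJ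
  set iincl := Submodule.subtypeL (LinearMap.ker (laplacianAt Ω0 d0 (j + 1) : Ω0 (j + 1 + 1) →ₗ[ℂ] Ω0 (j + 1 + 1))) with hi
  have hIeq : d0 (j + 1) (I t (j + 1) γ) = Jmap α := by
    have h := DFunLike.congr_fun (hId j) γ
    simp only [ContinuousLinearMap.comp_apply] at h
    rw [h, heq]
    rfl
  have hz : ⟪(α : Ω0 (j + 1 + 1)), Jmap α⟫ = 0 := by
    rw [← hIeq, ← ContinuousLinearMap.adjoint_inner_left, hdag, inner_zero_left]
  have hsplit : ⟪(α : Ω0 (j + 1 + 1)), (Jmap - iincl) α⟫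
      + ((‖(α : Ω0 (j + 1 + 1))‖ : ℂ)) ^ 2 = 0 := by
    rw [← hz]
    simp only [ContinuousLinearMap.sub_apply, inner_sub_right]
    have hii : ⟪(α : Ω0 (j + 1 + 1)), iincl α⟫ = ((‖(α : Ω0 (j + 1 + 1))‖ : ℂ)) ^ 2 := by
      rw [hi, Submodule.subtypeL_apply, inner_self_eq_norm_sq_to_K]
      norm_cast
    rw [hii]; ring
  have hα0 : α = 0 := by
    by_contra hne
    have hn : 0 < ‖(α : Ω0 (j + 1 + 1))‖ := by
      rw [norm_pos_iff]
      exact fun h => hne (Subtype.ext h)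
    have habs : ‖⟪(α : Ω0 (j + 1 + 1)), (Jmap - iincl) α⟫‖
        = ‖(α : Ω0 (j + 1 + 1))‖ ^ 2 := by
      have h' : ⟪(α : Ω0 (j + 1 + 1)), (Jmap - iincl) α⟫
          = -(((‖(α : Ω0 (j + 1 + 1))‖ : ℂ)) ^ 2) := by linear_combination hsplit
      rw [h', norm_neg, norm_pow]
      simp
    have hcoe : ‖α‖ = ‖(α : Ω0 (j + 1 + 1))‖ := rfl
    have key : ‖(α : Ω0 (j + 1 + 1))‖ ^ 2
        ≤ ‖Jmap - iincl‖ * ‖(α : Ω0 (j + 1 + 1))‖ ^ 2 := by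
      calc ‖(α : Ω0 (j + 1 + 1))‖ ^ 2
          = ‖⟪(α : Ω0 (j + 1 + 1)), (Jmap - iincl) α⟫‖ := habs.symm
        _ ≤ ‖(α : Ω0 (j + 1 + 1))‖ * ‖(Jmap - iincl) α‖ := norm_inner_le_norm _ _
        _ ≤ ‖(α : Ω0 (j + 1 + 1))‖ * (‖Jmap - iincl‖ * ‖α‖) :=
            mul_le_mul_of_nonneg_left ((Jmap - iincl).le_opNorm α) (norm_nonneg _)
        _ = ‖Jmap - iincl‖ * ‖(α : Ω0 (j + 1 + 1))‖ ^ 2 := by rw [hcoe]; ring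
    have hsq : 0 < ‖(α : Ω0 (j + 1 + 1))‖ ^ 2 := by positivity
    have hone : (1 : ℝ) ≤ ‖Jmap - iincl‖ := by
      have key' : 1 * ‖(α : Ω0 (j + 1 + 1))‖ ^ 2
          ≤ ‖Jmap - iincl‖ * ‖(α : Ω0 (j + 1 + 1))‖ ^ 2 := by linarith
      exact le_of_mul_le_mul_right key' hsq
    have := hbound (j + 1)
    rw [← hJ, ← hi] at this
    linarith
  rw [heq, hα0]
  simp
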